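/- arXiv:2201.00954 — 7 statements merged into one kernel-verified Lean document; each statement's English description precedes it below -/
import Mathlib

section
/- Let f(x) = x^n h(x^{(q-1)/m}) be a polynomial over F_q and k a positive integer. Then the k-th iterate satisfies f^{(k)}(x) = x^{n^k} · ∏_{i=0}^{k-1} h(ψ_f^{(i)}(x^{(q-1)/m}))^{n^{k-i-1}} for all x in F_q, where ψ_f(x) = x^n h(x)^{(q-1)/m}. -/
theorem stmt1 {F : Type*} [Field F] [Fintype F] (q n m : ℕ)
    (hq : Fintype.card F = q) (hm : m ∣ q - 1) (hm0 : 0 < m) (hn : 0 < n)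
    (h : Polynomial F)
    (f ψ : F → F)
    (hf : ∀ x, f x = x ^ n * h.eval (x ^ ((q - 1) / m)))
    (hψ : ∀ x, ψ x = x ^ n * (h.eval x) ^ ((q - 1) / m)) :
    ∀ k, 1 ≤ k → ∀ x : F,
      f^[k] x = x ^ (n ^ k) *
        ∏ i ∈ Finset.range k, (h.eval (ψ^[i] (x ^ ((q - 1) / m)))) ^ (n ^ (k - i - 1)) := by
  have key : ∀ x : F, (f x) ^ ((q - 1) / m) = ψ (x ^ ((q - 1) / m)) := by
    intro x
    rw [hf, hψ, mul_pow, ← pow_mul, ← pow_mul, Nat.mul_comm]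
  have main : ∀ k, ∀ x : F, f^[k] x = x ^ (n ^ k) *
      ∏ i ∈ Finset.range k, (h.eval (ψ^[i] (x ^ ((q - 1) / m)))) ^ (n ^ (k - i - 1)) := by
    intro k
    induction k with
    | zero => simp
    | succ k ih =>
      intro x
      rw [Function.iterate_succ_apply, ih (f x), Finset.prod_range_succ']
      simp only [Function.iterate_succ_apply, Function.iterate_zero_apply, key,
        Nat.succ_sub_succ, Nat.sub_zero, Nat.add_sub_cancel]
      rw [hf, mul_pow, ← pow_mul, ← pow_succ']
      ring
  exact fun k _ x => main k x
end

section
/- Let f(x) = x^n h(x^{(q-1)/m}) be m-nice over F_q (i.e., ψ_f(x) = x^n h(x)^{(q-1)/m} is injective on μ_m minus the preimage of 0, with image in μ_m ∪ {0}). If k ≥ 1, b ∈ F_q^*, and x ∈ F_q satisfies f^{(k)}(x) = b, then x^{(q-1)/m} = ψ_f^{(-k)}(b^{(q-1)/m}); in particular ψ_f^{(k)}(x^{(q-1)/m}) = b^{(q-1)/m}, and any two solutions x, y of f^{(k)}(x) = b satisfy x^{(q-1)/m} = y^{(q-1)/m}. -/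
theorem stmt6 {F : Type*} [Field F] [Fintype F] (q n m k : ℕ)
    (hq : Fintype.card F = q) (hm : m ∣ q - 1) (hm0 : 0 < m) (hn : 0 < n) (hk : 0 < k)
    (h : Polynomial F) (hh0 : h.eval 0 ≠ 0)
    (f ψ : F → F)
    (hf : ∀ x, f x = x ^ n * h.eval (x ^ ((q - 1) / m)))
    (hψ : ∀ x, ψ x = x ^ n * (h.eval x) ^ ((q - 1) / m))
    -- f is m-nice : ψ maps μ_m into μ_m ∪ {0} and is injective off the preimage of 0
    (hmap : ∀ x : F, x ^ m = 1 → ψ x = 0 ∨ (ψ x) ^ m = 1)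
    (hinj : ∀ x y : F, x ^ m = 1 → y ^ m = 1 → ψ x ≠ 0 → ψ y ≠ 0 → ψ x = ψ y → x = y)
    (b : F) (hb : b ≠ 0) :
    ∀ x : F, f^[k] x = b →
      ψ^[k] (x ^ ((q - 1) / m)) = b ^ ((q - 1) / m) ∧
      ∀ y : F, f^[k] y = b → y ^ ((q - 1) / m) = x ^ ((q - 1) / m) := by
  set d := (q - 1) / m with hd
  have hdm : d * m = q - 1 := Nat.div_mul_cancel hm
  -- ψ(x^d) = (f x)^d
  have key : ∀ x : F, ψ (x ^ d) = (f x) ^ d := by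
    intro x
    rw [hψ, hf, mul_pow, ← pow_mul, ← pow_mul, Nat.mul_comm d n]
  have keyIter : ∀ j (x : F), ψ^[j] (x ^ d) = (f^[j] x) ^ d := by
    intro j
    induction j with
    | zero => intro x; simp
    | succ j ih =>
      intro x
      rw [Function.iterate_succ_apply, Function.iterate_succ_apply, key, ih]
  have hψ0 : ψ 0 = 0 := by
    rw [hψ, zero_pow hn.ne', zero_mul]
  have hf0 : f 0 = 0 := by
    rw [hf, zero_pow hn.ne', zero_mul]
  -- membership in μ_m
  have hmu : ∀ x : F, x ≠ 0 → (x ^ d) ^ m = 1 := by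
    intro x hx
    rw [← pow_mul, hdm, ← hq, FiniteField.pow_card_sub_one_eq_one x hx]
  -- injectivity of iterates
  have injIter : ∀ j, ∀ a c : F, a ^ m = 1 → c ^ m = 1 →
      ψ^[j] a ≠ 0 → ψ^[j] c ≠ 0 → ψ^[j] a = ψ^[j] c → a = c := by
    intro j
    induction j with
    | zero => intro a c _ _ _ _ hac; simpa using hac
    | succ j ih =>
      intro a c ha hc hna hnc heq
      rw [Function.iterate_succ_apply] at hna hnc heq
      have hψa : ψ a ≠ 0 := by
        intro h0; rw [h0, Function.iterate_fixed hψ0] at hna; exact hna rfl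
      have hψc : ψ c ≠ 0 := by
        intro h0; rw [h0, Function.iterate_fixed hψ0] at hnc; exact hnc rfl
      have hma := (hmap a ha).resolve_left hψa
      have hmc := (hmap c hc).resolve_left hψc
      exact hinj a c ha hc hψa hψc (ih (ψ a) (ψ c) hma hmc hna hnc heq)
  intro x hx
  have hxne : x ≠ 0 := by
    intro h0; rw [h0, Function.iterate_fixed hf0] at hx; exact hb hx.symm
  have hmain : ψ^[k] (x ^ d) = b ^ d := by rw [keyIter, hx]
  refine ⟨hmain, fun y hy => ?_⟩
  have hyne : y ≠ 0 := by
    intro h0; rw [h0, Function.iterate_fixed hf0] at hy; exact hb hy.symm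
  have hymain : ψ^[k] (y ^ d) = b ^ d := by rw [keyIter, hy]
  have hbd : (b : F) ^ d ≠ 0 := pow_ne_zero _ hb
  exact injIter k _ _ (hmu y hyne) (hmu x hxne)
    (hymain ▸ hbd) (hmain ▸ hbd) (hymain.trans hmain.symm)
end

section
/- Let f(x) = x^n h(x^{(q-1)/m}) be m-nice over F_q and let b ∈ F_q^* and k ≥ 1. Then the number of solutions x ∈ F_q of f^{(k)}(x) = b is either 0 or gcd(n^k, ν), where ν is defined by writing (q-1)/m = νω with ω the greatest divisor of (q-1)/m coprime to n. -/
/-!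
Raising to the power `d = (q-1)/m` semiconjugates `f` to `ψ`, so `f^[k] x = b` forces
`ψ^[k] (x^d) = b^d ≠ 0`, and injectivity of `ψ^[k]` on `μ_m` away from its zeros pins down `x^d`.
On the other hand `f^[k] x = x^(n^k) * H_k (x^d)` for some function `H_k`, so two solutions differ
by a factor `u` with `u^(n^k) = u^d = 1`. A nonempty fibre is therefore a coset of
`μ_(gcd(n^k, d))`, and `gcd(n^k, ν ω) = gcd(n^k, ν)` because `ω` is coprime to `n`.
-/

open Function

theorem FiniteField.ncard_setOf_pow_eq_one {F : Type*} [Field F] [Fintype F] {k : ℕ}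
    (hk : k ≠ 0) : {u : F | u ^ k = 1}.ncard = (Fintype.card F - 1).gcd k := by
  have hset : {u : F | u ^ k = 1} = Units.val '' (rootsOfUnity k F : Set Fˣ) := by
    ext u
    refine ⟨fun hu => ?_, fun ⟨ζ, hζ, hζu⟩ => hζu ▸ (mem_rootsOfUnity' k ζ).1 hζ⟩
    have hu0 : u ≠ 0 := by
      rintro rfl
      exact zero_ne_one ((zero_pow hk).symm.trans hu)
    exact ⟨Units.mk0 u hu0, (mem_rootsOfUnity' k _).2 hu, rfl⟩
  rw [hset, Set.ncard_image_of_injective _ Units.val_injective, ← Nat.card_coe_set_eq,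
    SetLike.coe_sort_coe, rootsOfUnity_eq_ker, IsCyclic.card_powMonoidHom_ker,
    Nat.card_units, Nat.card_eq_fintype_card]

theorem Function.injOn_iterate_of_isFixedPt {α : Type*} {g : α → α} {s : Set α} {z : α}
    (hz : IsFixedPt g z) (hmaps : Set.MapsTo g (s ∩ g ⁻¹' {z}ᶜ) s)
    (hinj : Set.InjOn g (s ∩ g ⁻¹' {z}ᶜ)) (j : ℕ) :
    Set.InjOn g^[j] (s ∩ g^[j] ⁻¹' {z}ᶜ) := by
  induction j with
  | zero => exact fun x _ y _ h => h
  | succ j ih =>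
    rintro x ⟨hxs, hx⟩ y ⟨hys, hy⟩ hxy
    simp only [Set.mem_preimage, Set.mem_compl_singleton_iff, iterate_succ_apply] at hx hy hxy
    have hgx : g x ≠ z := fun h => hx (by rw [h, hz.iterate j])
    have hgy : g y ≠ z := fun h => hy (by rw [h, hz.iterate j])
    exact hinj ⟨hxs, hgx⟩ ⟨hys, hgy⟩ (ih ⟨hmaps ⟨hxs, hgx⟩, hx⟩ ⟨hmaps ⟨hys, hgy⟩, hy⟩ hxy)

theorem exists_iterate_eq_pow_mul {M : Type*} [CommMonoid M] {f H : M → M} {n d : ℕ}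
    (hf : ∀ x, f x = x ^ n * H (x ^ d)) (j : ℕ) :
    ∃ Hj : M → M, ∀ x, f^[j] x = x ^ n ^ j * Hj (x ^ d) := by
  induction j with
  | zero => exact ⟨fun _ => 1, by simp⟩
  | succ j ih =>
    obtain ⟨Hj, hj⟩ := ih
    refine ⟨fun t => Hj t ^ n * H (t ^ n ^ j * Hj t ^ d), fun x => ?_⟩
    have hpow : (x ^ n ^ j * Hj (x ^ d)) ^ d = (x ^ d) ^ n ^ j * Hj (x ^ d) ^ d := by
      rw [mul_pow, pow_right_comm]
    rw [iterate_succ_apply', hj, hf, hpow, mul_pow, ← pow_mul, ← pow_succ, mul_assoc]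

theorem setOf_eq_image_mul_setOf_pow_gcd_eq_one {G₀ : Type*} [CommGroupWithZero G₀]
    {g C : G₀ → G₀} {N d : ℕ} (hg : ∀ x, g x = x ^ N * C (x ^ d)) {b x₀ : G₀} (hb : b ≠ 0)
    (hx₀ : g x₀ = b) (hx₀0 : x₀ ≠ 0) (hfib : ∀ y, g y = b → y ^ d = x₀ ^ d) :
    {y | g y = b} = (x₀ * ·) '' {u | u ^ N.gcd d = 1} := by
  ext y
  simp only [Set.mem_ofPred_eq, Set.mem_image, pow_gcd_eq_one]
  constructor
  · intro hy
    have hyd := hfib y hy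
    have hC : C (x₀ ^ d) ≠ 0 := right_ne_zero_of_mul (by rwa [← hg, hx₀])
    have hyN : y ^ N = x₀ ^ N := by
      refine mul_right_cancel₀ hC ?_
      calc y ^ N * C (x₀ ^ d) = g y := by rw [hg, hyd]
        _ = x₀ ^ N * C (x₀ ^ d) := by rw [hy, ← hx₀, hg]
    refine ⟨y / x₀, ⟨?_, ?_⟩, mul_div_cancel₀ y hx₀0⟩
    · rw [div_pow, hyN, div_self (pow_ne_zero N hx₀0)]
    · rw [div_pow, hyd, div_self (pow_ne_zero d hx₀0)]
  · rintro ⟨u, ⟨huN, hud⟩, rfl⟩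
    rw [hg, mul_pow, mul_pow, huN, hud, mul_one, mul_one, ← hg, hx₀]

theorem stmt7_general {F : Type*} [Field F] [Fintype F] (q n m k ν ω : ℕ)
    (hq : Fintype.card F = q) (hm : m ∣ q - 1) (hn : 0 < n)
    (h : Polynomial F)
    (f ψ : F → F)
    (hf : ∀ x, f x = x ^ n * h.eval (x ^ ((q - 1) / m)))
    (hψ : ∀ x, ψ x = x ^ n * (h.eval x) ^ ((q - 1) / m))
    -- f is m-nice
    (hmap : ∀ x : F, x ^ m = 1 → ψ x = 0 ∨ (ψ x) ^ m = 1)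
    (hinj : ∀ x y : F, x ^ m = 1 → y ^ m = 1 → ψ x ≠ 0 → ψ y ≠ 0 → ψ x = ψ y → x = y)
    -- (q-1)/m = ν·ω with ω the greatest divisor of (q-1)/m coprime to n
    (hνω : (q - 1) / m = ν * ω) (hωcop : Nat.Coprime ω n)
    (b : F) (hb : b ≠ 0) :
    Set.ncard {x : F | f^[k] x = b} = 0 ∨
      Set.ncard {x : F | f^[k] x = b} = Nat.gcd (n ^ k) ν := by
  set d := (q - 1) / m
  obtain ⟨H, hH⟩ := exists_iterate_eq_pow_mul (H := fun t => h.eval t) hf k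
  have hsemi : Semiconj (· ^ d) f ψ := fun x => by simp only [hf, hψ]; ring
  have hψk : Set.InjOn ψ^[k] ({t | t ^ m = 1} ∩ ψ^[k] ⁻¹' {0}ᶜ) :=
    injOn_iterate_of_isFixedPt (by simp [IsFixedPt, hψ, hn.ne'])
      (fun t ht => (hmap t ht.1).resolve_left ht.2)
      (fun s hs t ht hst => hinj s t hs.1 ht.1 hs.2 (hst ▸ hs.2) hst) k
  have hne : ∀ y, f^[k] y = b → y ≠ 0 := by
    rintro y hy rfl
    rw [hH, zero_pow (pow_pos hn k).ne', zero_mul] at hy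
    exact hb hy.symm
  have hmem : ∀ y, f^[k] y = b → y ^ d ∈ {t | t ^ m = 1} ∩ ψ^[k] ⁻¹' {0}ᶜ := fun y hy =>
    ⟨show (y ^ d) ^ m = 1 by
        rw [← pow_mul, Nat.div_mul_cancel hm, ← hq]
        exact FiniteField.pow_card_sub_one_eq_one y (hne y hy),
      show ψ^[k] (y ^ d) ≠ 0 by
        rw [← hsemi.iterate_right k y, hy]
        exact pow_ne_zero d hb⟩
  rcases Set.eq_empty_or_nonempty {x | f^[k] x = b} with hS | ⟨x₀, hx₀ : f^[k] x₀ = b⟩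
  · exact Or.inl (by rw [hS, Set.ncard_empty])
  right
  have hfib : ∀ y, f^[k] y = b → y ^ d = x₀ ^ d := fun y hy =>
    hψk (hmem y hy) (hmem x₀ hx₀)
      (by rw [← hsemi.iterate_right k, ← hsemi.iterate_right k, hy, hx₀])
  have hgcd : (n ^ k).gcd d ∣ q - 1 := (Nat.gcd_dvd_right _ _).trans (Nat.div_dvd_of_dvd hm)
  rw [setOf_eq_image_mul_setOf_pow_gcd_eq_one hH hb hx₀ (hne x₀ hx₀) hfib,
    Set.ncard_image_of_injective _ (mul_right_injective₀ (hne x₀ hx₀)),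
    FiniteField.ncard_setOf_pow_eq_one (Nat.gcd_pos_of_pos_left _ (pow_pos hn k)).ne', hq,
    Nat.gcd_eq_right hgcd, hνω, Nat.Coprime.gcd_mul_right_cancel_right ν (hωcop.pow_right k)]

theorem stmt7 {F : Type*} [Field F] [Fintype F] (q n m k ν ω : ℕ)
    (hq : Fintype.card F = q) (hm : m ∣ q - 1) (hm0 : 0 < m) (hn : 0 < n) (hk : 0 < k)
    (h : Polynomial F) (hh0 : h.eval 0 ≠ 0)
    (f ψ : F → F)
    (hf : ∀ x, f x = x ^ n * h.eval (x ^ ((q - 1) / m)))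
    (hψ : ∀ x, ψ x = x ^ n * (h.eval x) ^ ((q - 1) / m))
    -- f is m-nice
    (hmap : ∀ x : F, x ^ m = 1 → ψ x = 0 ∨ (ψ x) ^ m = 1)
    (hinj : ∀ x y : F, x ^ m = 1 → y ^ m = 1 → ψ x ≠ 0 → ψ y ≠ 0 → ψ x = ψ y → x = y)
    -- (q-1)/m = ν·ω with ω the greatest divisor of (q-1)/m coprime to n
    (hνω : (q - 1) / m = ν * ω) (hωcop : Nat.Coprime ω n)
    (hωmax : ∀ w, w ∣ (q - 1) / m → Nat.Coprime w n → w ∣ ω)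
    (b : F) (hb : b ≠ 0) :
    Set.ncard {x : F | f^[k] x = b} = 0 ∨
      Set.ncard {x : F | f^[k] x = b} = Nat.gcd (n ^ k) ν :=
  stmt7_general q n m k ν ω hq hm hn h f ψ hf hψ hmap hinj hνω hωcop b hb
end

section
/- Let f(x) = a·x^n over F_q with a = α^ℓ for a primitive root α, and let d ≥ 1. Then the number of x ∈ F_q^* with f^{(d)}(x) = x equals gcd(q-1, n^d - 1) if gcd(q-1, n^d - 1) divides ℓ·(n^d - 1)/(n - 1), and 0 otherwise. -/
open Subgroup

private lemma geom_aux (n : ℕ) (hn : 1 ≤ n) : ∀ d : ℕ,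
    (n - 1) * ∑ i ∈ Finset.range d, n ^ i = n ^ d - 1 := by
  intro d
  induction d with
  | zero => simp
  | succ d ih =>
    rw [Finset.sum_range_succ, Nat.mul_add, ih, pow_succ]
    have h1 : 1 ≤ n ^ d := Nat.one_le_pow _ _ hn
    have : (n - 1) * n ^ d = n ^ d * n - n ^ d := by
      rw [Nat.sub_mul, one_mul, Nat.mul_comm]
    rw [this]
    have h2 : n ^ d ≤ n ^ d * n := Nat.le_mul_of_pos_right _ hn
    omega

private lemma iter_aux {G : Type*} [CommMonoid G] (a : G) (n : ℕ) : ∀ (d : ℕ) (x : G),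
    (fun y => a * y ^ n)^[d] x = a ^ (∑ i ∈ Finset.range d, n ^ i) * x ^ n ^ d := by
  intro d
  induction d with
  | zero => intro x; simp
  | succ d ih =>
    intro x
    have hsum : ∑ i ∈ Finset.range (d + 1), n ^ i
        = 1 + (∑ i ∈ Finset.range d, n ^ i) * n := by
      rw [Finset.sum_range_succ', Finset.sum_mul]
      simp [pow_succ, add_comm]
    rw [Function.iterate_succ_apply', ih, hsum, mul_pow, ← pow_mul, ← pow_mul,
      pow_add, pow_one, pow_succ, mul_assoc]

private lemma zpow_eq_of_dvd {G : Type*} [Group G] {α : G} {N : ℕ} (hN : α ^ N = 1)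
    {A B : ℤ} (h : (N : ℤ) ∣ A - B) : α ^ A = α ^ B := by
  obtain ⟨c, hc⟩ := h
  have hA : A = B + N * c := by linarith
  rw [hA, zpow_add, zpow_mul, zpow_natCast, hN, one_zpow, mul_one]

private lemma ker_card {G : Type*} [CommGroup G] [Fintype G] (α : G)
    (hα : ∀ x : G, x ∈ Subgroup.zpowers α) (m : ℕ) (hm : 0 < m) :
    Nat.card {x : G | x ^ m = 1} = Nat.gcd (Fintype.card G) m := by
  classical
  haveI : IsCyclic G := ⟨α, hα⟩
  set N := Fintype.card G with hNdef
  have hNpos : 0 < N := Fintype.card_pos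
  set g := Nat.gcd N m with hg
  have hgpos : 0 < g := Nat.gcd_pos_of_pos_right _ hm
  have hgN : g ∣ N := Nat.gcd_dvd_left _ _
  have hgm : g ∣ m := Nat.gcd_dvd_right _ _
  have hordα : orderOf α = N := by
    rw [orderOf_eq_card_of_forall_mem_zpowers hα, Nat.card_eq_fintype_card]
  -- the two sets coincide
  have hsets : {x : G | x ^ m = 1} = {x : G | x ^ g = 1} := by
    ext x
    simp only [Set.mem_setOf_eq]
    constructor
    · intro hx
      have hxN : x ^ N = 1 := pow_card_eq_one
      have hbez := Nat.gcd_eq_gcd_ab N m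
      have : x ^ (g : ℤ) = 1 := by
        rw [hg, hbez, zpow_add, zpow_mul, zpow_mul, zpow_natCast, zpow_natCast, hx, hxN,
          one_zpow, one_zpow, one_mul]
      simpa [zpow_natCast] using this
    · intro hx
      obtain ⟨c, hc⟩ := hgm
      rw [hc, pow_mul, hx, one_pow]
  rw [hsets]
  -- upper bound
  have hle : Nat.card {x : G | x ^ g = 1} ≤ g := by
    rw [Nat.card_coe_set_eq, Set.ncard_eq_toFinset_card', Set.toFinset_setOf]
    exact IsCyclic.card_pow_eq_one_le hgpos
  -- lower bound via subgroup
  have hdvd2 : (N / g) ∣ N := Nat.div_dvd_of_dvd hgN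
  have hord : orderOf (α ^ (N / g)) = g := by
    rw [orderOf_pow, hordα, Nat.gcd_eq_right hdvd2, Nat.div_div_self hgN hNpos.ne']
  have hsub : (Subgroup.zpowers (α ^ (N / g)) : Set G) ⊆ {x : G | x ^ g = 1} := by
    rintro x ⟨k, rfl⟩
    simp only [Set.mem_setOf_eq]
    have h1 : ((α ^ (N / g)) ^ k) ^ g = ((α ^ (N / g)) ^ g) ^ k := by
      rw [← zpow_natCast ((α ^ (N / g)) ^ k), ← zpow_mul, mul_comm, zpow_mul, zpow_natCast]
    rw [h1, ← pow_mul, Nat.div_mul_cancel hgN, pow_card_eq_one, one_zpow]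
  have hge : g ≤ Nat.card {x : G | x ^ g = 1} := by
    have := Nat.card_mono (Set.toFinite {x : G | x ^ g = 1}) hsub
    rwa [show Nat.card (Subgroup.zpowers (α ^ (N / g)) : Set G) =
        Nat.card (Subgroup.zpowers (α ^ (N / g))) from rfl, Nat.card_zpowers, hord] at this
  omega

private lemma count_aux {G : Type*} [CommGroup G] [Fintype G] (α : G)
    (hα : ∀ x : G, x ∈ Subgroup.zpowers α) (m t : ℕ) (hm : 0 < m) :
    Nat.card {x : G | x ^ m = (α ^ t)⁻¹} =
      if Nat.gcd (Fintype.card G) m ∣ t then Nat.gcd (Fintype.card G) m else 0 := by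
  classical
  set N := Fintype.card G with hNdef
  set g := Nat.gcd N m with hg
  have hgN : g ∣ N := Nat.gcd_dvd_left _ _
  have hgm : g ∣ m := Nat.gcd_dvd_right _ _
  have hordα : orderOf α = N := by
    rw [orderOf_eq_card_of_forall_mem_zpowers hα, Nat.card_eq_fintype_card]
  have hαN : α ^ N = 1 := pow_card_eq_one
  have hiff : (∃ x : G, x ^ m = (α ^ t)⁻¹) ↔ g ∣ t := by
    constructor
    · rintro ⟨x, hx⟩
      obtain ⟨k, rfl⟩ := hα x
      have hx' : (α ^ k) ^ (m : ℤ) = (α ^ (t : ℤ))⁻¹ := by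
        rw [zpow_natCast, zpow_natCast]; exact hx
      have : α ^ (k * m + t) = 1 := by
        rw [zpow_add, zpow_mul, hx', inv_mul_cancel]
      have hdvd : (N : ℤ) ∣ k * m + t := by
        rw [← hordα]; exact orderOf_dvd_iff_zpow_eq_one.mpr this
      have h1 : (g : ℤ) ∣ k * m + t := dvd_trans (Int.natCast_dvd_natCast.mpr hgN) hdvd
      have h2 : (g : ℤ) ∣ k * m := Dvd.dvd.mul_left (Int.natCast_dvd_natCast.mpr hgm) k
      have h3 : (g : ℤ) ∣ (t : ℤ) := (dvd_add_right h2).mp h1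
      exact_mod_cast h3
    · rintro ⟨w, hw⟩
      have hbez := Nat.gcd_eq_gcd_ab N m
      set u := Nat.gcdA N m
      set v := Nat.gcdB N m
      refine ⟨α ^ (-(v * w) : ℤ), ?_⟩
      have h1 : (α ^ (-(v * w) : ℤ)) ^ m = α ^ ((-(v * w)) * m : ℤ) := by
        rw [← zpow_natCast (α ^ (-(v * w) : ℤ)), ← zpow_mul]
      have h2 : (α ^ t)⁻¹ = α ^ (-(t : ℤ)) := by rw [zpow_neg, zpow_natCast]
      rw [h1, h2]
      apply zpow_eq_of_dvd hαN
      have : (-(v * w)) * m - (-(t : ℤ)) = (t : ℤ) - v * w * m := by ring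
      rw [this]
      refine ⟨u * w, ?_⟩
      have ht : (t : ℤ) = (g : ℤ) * w := by exact_mod_cast hw
      rw [ht, hg, hbez]
      ring
  by_cases hsol : ∃ x : G, x ^ m = (α ^ t)⁻¹
  · rw [if_pos (hiff.mp hsol)]
    obtain ⟨x0, hx0⟩ := hsol
    have e : {x : G | x ^ m = (α ^ t)⁻¹} ≃ {x : G | x ^ m = 1} := by
      refine ⟨fun x => ⟨x.1 * x0⁻¹, ?_⟩, fun y => ⟨y.1 * x0, ?_⟩, ?_, ?_⟩
      · have hx := x.2
        simp only [Set.mem_setOf_eq] at hx ⊢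
        rw [mul_pow, hx, inv_pow, hx0, inv_inv, inv_mul_cancel]
      · have hy := y.2
        simp only [Set.mem_setOf_eq] at hy ⊢
        rw [mul_pow, hy, one_mul, hx0]
      · intro x; ext; simp
      · intro y; ext; simp
    rw [Nat.card_congr e, ker_card α hα m hm]
  · rw [if_neg (fun h => hsol (hiff.mpr h))]
    have : {x : G | x ^ m = (α ^ t)⁻¹} = ∅ := by
      ext x; simp only [Set.mem_setOf_eq, Set.mem_empty_iff_false, iff_false]
      exact fun hx => hsol ⟨x, hx⟩
    rw [this]
    simp

theorem stmt11 {F : Type*} [Field F] [Fintype F] (q n d ℓ : ℕ)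
    (hq : Fintype.card F = q) (α : Fˣ) (hα : ∀ x : Fˣ, x ∈ Subgroup.zpowers α)
    (hn : 2 ≤ n) (hd : 1 ≤ d) (a : Fˣ) (ha : a = α ^ ℓ) :
    Nat.card {x : Fˣ | (fun y => a * y ^ n)^[d] x = x} =
      if Nat.gcd (q - 1) (n ^ d - 1) ∣ ℓ * ((n ^ d - 1) / (n - 1)) then
        Nat.gcd (q - 1) (n ^ d - 1)
      else 0 := by
  classical
  have hn1 : 1 ≤ n := by omega
  have hnd2 : 2 ≤ n ^ d := by
    calc 2 = 2 ^ 1 := by norm_num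
    _ ≤ 2 ^ d := Nat.pow_le_pow_right (by norm_num) hd
    _ ≤ n ^ d := Nat.pow_le_pow_left hn d
  set m := n ^ d - 1 with hmdef
  have hm : 0 < m := by omega
  set S := ∑ i ∈ Finset.range d, n ^ i with hSdef
  have hdivS : (n ^ d - 1) / (n - 1) = S := by
    rw [← geom_aux n hn1 d, Nat.mul_div_cancel_left _ (by omega : 0 < n - 1)]
  have hN : Fintype.card Fˣ = q - 1 := by rw [Fintype.card_units, hq]
  have hfix : {x : Fˣ | (fun y => a * y ^ n)^[d] x = x}
      = {x : Fˣ | x ^ m = (α ^ (ℓ * S))⁻¹} := by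
    ext x
    simp only [Set.mem_setOf_eq]
    rw [iter_aux, ha, ← pow_mul, ← hSdef]
    have hpow : x ^ n ^ d = x ^ m * x := by
      rw [← pow_succ, hmdef, Nat.sub_add_cancel (by omega)]
    rw [hpow]
    constructor
    · intro h
      have h1 : α ^ (ℓ * S) * x ^ m = 1 := by
        have h2 : (α ^ (ℓ * S) * x ^ m) * x = 1 * x := by
          rw [one_mul, mul_assoc]; exact h
        exact mul_right_cancel h2
      exact (inv_eq_of_mul_eq_one_right h1).symm
    · intro h
      rw [h, ← mul_assoc, mul_inv_cancel, one_mul]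
  rw [hfix, count_aux α hα m (ℓ * S) hm, hN, hdivS]
end

section
/- Let f(x) = x^n h(x^{(q-1)/m}) over F_q, and let a, b ∈ F_q^* lie in the same connected component of the functional graph of f (i.e., f^{(i)}(a) = f^{(j)}(b) for some i, j ≥ 0), with f m-nice. If a^{(q-1)/m} and b^{(q-1)/m} lie on cycles of ψ_f in μ_m, then they lie on the same cycle of ψ_f. -/
theorem stmt14 {F : Type*} [Field F] [Fintype F] (q n m : ℕ)
    (hq : Fintype.card F = q) (hm : m ∣ q - 1) (hm0 : 0 < m) (hn : 0 < n)
    (h : Polynomial F) (hh0 : h.eval 0 ≠ 0)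
    (f ψ : F → F)
    (hf : ∀ x, f x = x ^ n * h.eval (x ^ ((q - 1) / m)))
    (hψ : ∀ x, ψ x = x ^ n * (h.eval x) ^ ((q - 1) / m))
    -- f is m-nice
    (hmap : ∀ x : F, x ^ m = 1 → ψ x = 0 ∨ (ψ x) ^ m = 1)
    (hinj : ∀ x y : F, x ^ m = 1 → y ^ m = 1 → ψ x ≠ 0 → ψ y ≠ 0 → ψ x = ψ y → x = y)
    (a b : F) (ha : a ≠ 0) (hb : b ≠ 0)
    -- a and b lie in the same connected component of the functional graph of f
    (hcomp : ∃ i j : ℕ, f^[i] a = f^[j] b)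
    -- a^((q-1)/m) and b^((q-1)/m) lie on cycles of ψ
    (hpera : ∃ p, 0 < p ∧ ψ^[p] (a ^ ((q - 1) / m)) = a ^ ((q - 1) / m))
    (hperb : ∃ p, 0 < p ∧ ψ^[p] (b ^ ((q - 1) / m)) = b ^ ((q - 1) / m)) :
    ∃ j : ℕ, ψ^[j] (a ^ ((q - 1) / m)) = b ^ ((q - 1) / m) := by
  set d := (q - 1) / m with hd
  -- semiconjugacy: (f x)^d = ψ (x^d)
  have hsemi : ∀ x : F, (f x) ^ d = ψ (x ^ d) := by
    intro x
    rw [hf, hψ, mul_pow, ← pow_mul, ← pow_mul, Nat.mul_comm]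
  have hiter : ∀ (i : ℕ) (x : F), (f^[i] x) ^ d = ψ^[i] (x ^ d) := by
    intro i
    induction i with
    | zero => intro x; simp
    | succ k ih =>
      intro x
      rw [Function.iterate_succ_apply, Function.iterate_succ_apply, ih, hsemi]
  obtain ⟨i, j, hij⟩ := hcomp
  obtain ⟨p, hp, hpb⟩ := hperb
  -- ψ^[p*k] (b^d) = b^d
  have hmult : ∀ k : ℕ, ψ^[p * k] (b ^ d) = b ^ d := by
    intro k
    induction k with
    | zero => simp
    | succ t ih =>
      rw [Nat.mul_succ, Function.iterate_add_apply, hpb, ih]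
  refine ⟨p * (j + 1) - j + i, ?_⟩
  have hle : j ≤ p * (j + 1) := le_trans (Nat.le_succ j) (Nat.le_mul_of_pos_left _ hp)
  rw [Function.iterate_add_apply, ← hiter i a, hij, hiter j b,
    ← Function.iterate_add_apply, Nat.sub_add_cancel hle, hmult]
end

section
/- Let f(x) = x^n h(x^{(q-1)/m}) over F_q be m-nice, and suppose a ∈ F_q^* with a = α^{sm + r} where α is a primitive root, a^{(q-1)/m} = ξ is a ψ_f-periodic point of period k, and α^ℓ = ∏_{j=0}^{k-1} h(ψ_f^{(j)}(ξ))^{n^{k-j-1}}. Then f^{(dk)}(a) = a if and only if ((n^{dk}-1)/(n^k-1))·((sm+r)(n^k-1) + ℓ) ≡ 0 (mod q-1). -/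
theorem stmt16 {F : Type*} [Field F] [Fintype F] (q n m k d σ r ℓ : ℕ)
    (hq : Fintype.card F = q) (hm : m ∣ q - 1) (hm0 : 0 < m) (hn : 0 < n)
    (hk : 0 < k) (hd : 0 < d)
    (h : Polynomial F) (hh0 : h.eval 0 ≠ 0)
    (f ψ : F → F)
    (hf : ∀ x, f x = x ^ n * h.eval (x ^ ((q - 1) / m)))
    (hψ : ∀ x, ψ x = x ^ n * (h.eval x) ^ ((q - 1) / m))
    -- f is m-nice
    (hmap : ∀ x : F, x ^ m = 1 → ψ x = 0 ∨ (ψ x) ^ m = 1)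
    (hinj : ∀ x y : F, x ^ m = 1 → y ^ m = 1 → ψ x ≠ 0 → ψ y ≠ 0 → ψ x = ψ y → x = y)
    (α : F) (hα : ∀ x : F, x ≠ 0 → ∃ i : ℕ, α ^ i = x)
    (a : F) (ha : a = α ^ (σ * m + r))
    (ξ : F) (hξ : ξ = a ^ ((q - 1) / m)) (hξper : ψ^[k] ξ = ξ)
    (hℓ : α ^ ℓ = ∏ j ∈ Finset.range k, (h.eval (ψ^[j] ξ)) ^ (n ^ (k - j - 1))) :
    f^[d * k] a = a ↔
      (q - 1) ∣ (∑ j ∈ Finset.range d, n ^ (j * k)) *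
        ((σ * m + r) * (n ^ k - 1) + ℓ) := by
  classical
  set N := (q - 1) / m with hNdef
  by_cases hα0 : α = 0
  · -- degenerate case: α = 0, so the field has exactly two elements
    subst hα0
    have hcard2 : q = 2 := by
      have hsub : (Finset.univ : Finset F) ⊆ {0, 1} := by
        intro x _
        rcases eq_or_ne x 0 with hx | hx
        · simp [hx]
        · obtain ⟨i, hi⟩ := hα x hx
          rcases Nat.eq_zero_or_pos i with hi0 | hi0
          · subst hi0; simp [← hi]
          · rw [zero_pow hi0.ne'] at hi
            exact absurd hi.symm hx
      have h2 : Fintype.card F ≤ 2 := by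
        calc Fintype.card F = (Finset.univ : Finset F).card := rfl
          _ ≤ ({0, 1} : Finset F).card := Finset.card_le_card hsub
          _ ≤ 2 := (Finset.card_insert_le 0 {1}).trans (by simp)
      have h1 : 2 ≤ Fintype.card F := Fintype.one_lt_card
      omega
    have hq1 : q - 1 = 1 := by omega
    have hiter : f^[d * k] a = a := by
      rcases Nat.eq_zero_or_pos (σ * m + r) with h0 | h0
      · -- a = 1
        have ha1 : a = 1 := by rw [ha, h0, pow_zero]
        have hξ1 : ξ = 1 := by rw [hξ, ha1, one_pow]
        have hN1 : 0 < N := by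
          have hm1 : m = 1 := by
            have := Nat.le_of_dvd (by omega) hm
            omega
          simp [hNdef, hm1, hcard2]
        have hψ0 : ψ 0 = 0 := by
          rw [hψ, zero_pow hn.ne', zero_mul]
        have hh1 : h.eval 1 ≠ 0 := by
          intro hcon
          have hψ1 : ψ 1 = 0 := by
            rw [hψ, one_pow, one_mul, hcon, zero_pow hN1.ne']
          have hzero : ψ^[k] (1 : F) = 0 := by
            obtain ⟨k', rfl⟩ := Nat.exists_eq_succ_of_ne_zero hk.ne'
            rw [Function.iterate_succ_apply, hψ1]
            exact Function.iterate_fixed hψ0 k'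
          rw [hξ1] at hξper
          rw [hξper] at hzero
          exact one_ne_zero hzero
        have hh11 : h.eval 1 = 1 := by
          by_contra hne
          obtain ⟨i, hi⟩ := hα (h.eval 1) hh1
          rcases Nat.eq_zero_or_pos i with hi0 | hi0
          · subst hi0; exact hne (by simpa using hi.symm)
          · rw [zero_pow hi0.ne'] at hi
            exact hh1 hi.symm
        have hfix : f 1 = 1 := by
          rw [hf, one_pow, one_pow, hh11, one_mul]
        rw [ha1]
        exact Function.iterate_fixed hfix (d * k)
      · -- a = 0
        have ha0 : a = 0 := by rw [ha, zero_pow h0.ne']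
        have hfix : f 0 = 0 := by
          rw [hf, zero_pow hn.ne', zero_mul]
        rw [ha0]
        exact Function.iterate_fixed hfix (d * k)
    simp [hiter, hq1]
  · -- main case: α is a primitive root
    set u : Fˣ := Units.mk0 α hα0 with hu
    have hord : orderOf u = q - 1 := by
      rw [← hq, ← Fintype.card_units, ← Nat.card_eq_fintype_card]
      refine orderOf_eq_card_of_forall_mem_zpowers ?_
      intro v
      obtain ⟨i, hi⟩ := hα (v : F) (Units.ne_zero v)
      refine ⟨(i : ℤ), ?_⟩
      simp only [zpow_natCast]
      exact Units.ext (by simpa [hu] using hi)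
    have hpow_iff : ∀ i j : ℕ, (α ^ i = α ^ j ↔ i ≡ j [MOD q - 1]) := by
      intro i j
      rw [← hord, ← pow_eq_pow_iff_modEq]
      constructor
      · intro hij
        exact Units.ext (by simpa [hu] using hij)
      · intro hij
        have := congrArg Units.val hij
        simpa [hu] using this
    -- semiconjugacy
    have hsemi : ∀ x : F, (f x) ^ N = ψ (x ^ N) := by
      intro x
      rw [hf, hψ, mul_pow, ← pow_mul, ← pow_mul, mul_comm n N]
    have hsemit : ∀ (t : ℕ) (x : F), (f^[t] x) ^ N = ψ^[t] (x ^ N) := by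
      intro t
      induction t with
      | zero => simp
      | succ t ih =>
        intro x
        rw [Function.iterate_succ_apply', Function.iterate_succ_apply', hsemi, ih]
    -- closed form for iterates
    have hclosed : ∀ (t : ℕ) (x : F),
        f^[t] x = x ^ n ^ t *
          ∏ j ∈ Finset.range t, (h.eval (ψ^[j] (x ^ N))) ^ n ^ (t - j - 1) := by
      intro t x
      induction t with
      | zero => simp
      | succ t ih =>
        rw [Function.iterate_succ_apply', hf, hsemit, ih]
        rw [mul_pow, ← pow_mul, ← pow_succ, Finset.prod_range_succ]
        rw [← Finset.prod_pow]
        have hprod : ∀ j ∈ Finset.range t,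
            ((h.eval (ψ^[j] (x ^ N))) ^ n ^ (t - j - 1)) ^ n
              = (h.eval (ψ^[j] (x ^ N))) ^ n ^ (t + 1 - j - 1) := by
          intro j hj
          rw [Finset.mem_range] at hj
          rw [← pow_mul, ← pow_succ]
          congr 2
          omega
        rw [Finset.prod_congr rfl hprod]
        have ht : t + 1 - t - 1 = 0 := by omega
        rw [ht, pow_zero, pow_one]
        ring
    -- one-step formula over k iterations
    have hstep : ∀ x : F, x ^ N = ξ → f^[k] x = x ^ n ^ k * α ^ ℓ := by
      intro x hx
      rw [hclosed k x, hx, ← hℓ]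
    -- main induction
    have key : ∀ e : ℕ, f^[e * k] a = α ^ ((σ * m + r) * n ^ (e * k)
        + ℓ * ∑ i ∈ Finset.range e, n ^ (i * k)) ∧ (f^[e * k] a) ^ N = ξ := by
      intro e
      induction e with
      | zero => exact ⟨by simpa using ha, by simpa using hξ.symm⟩
      | succ e ih =>
        obtain ⟨ih1, ih2⟩ := ih
        have hiter : f^[(e + 1) * k] a = f^[k] (f^[e * k] a) := by
          have hek : (e + 1) * k = k + e * k := by ring
          rw [hek, Function.iterate_add_apply]
        constructor
        · rw [hiter, hstep _ ih2, ih1, ← pow_mul, ← pow_add]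
          congr 1
          have hs : ∀ i : ℕ, n ^ ((i + 1) * k) = n ^ (i * k) * n ^ k := by
            intro i; rw [← pow_add]; congr 1; ring
          rw [Finset.sum_range_succ']
          simp only [hs, Nat.zero_mul, pow_zero]
          rw [← Finset.sum_mul]
          ring
        · rw [hiter, hsemit, ih2, hξper]
    obtain ⟨key1, -⟩ := key d
    rw [key1, ha, hpow_iff, Nat.modEq_iff_dvd]
    set A := σ * m + r with hA
    set S := ∑ i ∈ Finset.range d, n ^ (i * k) with hS
    have hnk1 : 1 ≤ n ^ k := Nat.one_le_pow _ _ hn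
    have hgeomS : (S : ℤ) * ((n : ℤ) ^ k - 1) = (n : ℤ) ^ (d * k) - 1 := by
      rw [hS]
      push_cast
      have h1 : ∑ i ∈ Finset.range d, (n : ℤ) ^ (i * k)
          = ∑ i ∈ Finset.range d, ((n : ℤ) ^ k) ^ i :=
        Finset.sum_congr rfl fun i _ => by rw [← pow_mul, mul_comm]
      have h2 : (n : ℤ) ^ (d * k) = ((n : ℤ) ^ k) ^ d := by
        rw [← pow_mul, mul_comm]
      rw [h1, h2]
      exact geom_sum_mul _ _
    have hE : (A : ℤ) - ((A * n ^ (d * k) + ℓ * S : ℕ) : ℤ)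
        = -(((S * (A * (n ^ k - 1) + ℓ) : ℕ) : ℤ)) := by
      push_cast [Nat.cast_sub hnk1]
      linear_combination (A : ℤ) * hgeomS
    rw [hE, Int.dvd_neg, Int.natCast_dvd_natCast]
end

section
/- Let f(x) = x^n h(x^{(q-1)/m}) over F_q with f(0) = 0 and h(0) ≠ 0, and suppose h has no roots in μ_m. If f is m-nice, then f permutes the nonzero elements whose ((q-1)/m)-th power lies on a ψ_f-cycle if and only if gcd(n, (q-1)/m) = 1; in particular, if gcd(n, q-1) = 1 and f is m-nice with h nonvanishing on μ_m, then f is a bijection on F_q^*. -/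
/-!
Write `s = (q - 1) / m`, so that `x ↦ x ^ s` maps `F^*` into `μ_m` and `f x ^ s = ψ (x ^ s)`.
Since `h` has no root in `μ_m`, niceness makes `ψ` an injection of the finite set `μ_m` into
itself, so every point of `μ_m` is `ψ`-periodic and the set in the statement is all of `F^*`.
If `f x = f y` then `ψ (x ^ s) = ψ (y ^ s)`, hence `x ^ s = y ^ s` and, cancelling `h (x ^ s)`,
`x ^ n = y ^ n`; when `gcd (n, s) = 1` this forces `x = y`. Conversely a prime `p` dividing both
`n` and `s` gives a `p`-th root of unity `ζ ≠ 1`, and `f ζ = f 1`.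
-/

open Function Set

theorem Set.Finite.mem_periodicPts_of_injOn {α : Type*} {f : α → α} {s : Set α}
    (hs : s.Finite) (hmaps : MapsTo f s s) (hinj : InjOn f s) {x : α} (hx : x ∈ s) :
    x ∈ periodicPts f := by
  have := hs.to_subtype
  obtain ⟨p, hp, hper⟩ :=
    mem_periodicPts.mp ((hmaps.restrict_inj.mpr hinj).mem_periodicPts ⟨x, hx⟩)
  refine mk_mem_periodicPts hp ?_
  simpa [IsPeriodicPt, IsFixedPt, hmaps.iterate_restrict, Subtype.ext_iff] using hper

theorem eq_of_pow_eq_pow_of_coprime {G₀ : Type*} [CommGroupWithZero G₀] {a b : ℕ}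
    (hab : a.Coprime b) {x y : G₀} (hy : y ≠ 0) (ha : x ^ a = y ^ a) (hb : x ^ b = y ^ b) :
    x = y := by
  rw [← div_eq_one_iff_eq hy, ← pow_eq_one_iff_of_coprime hab, div_pow, div_pow, ha, hb,
    div_self (pow_ne_zero _ hy), div_self (pow_ne_zero _ hy)]
  exact ⟨rfl, rfl⟩

theorem injOn_pow_mul_comp_pow_of_coprime {G₀ : Type*} [CommGroupWithZero G₀] {n s : ℕ}
    (hcop : n.Coprime s) {g : G₀ → G₀} (hg : ∀ x : G₀, x ≠ 0 → g (x ^ s) ≠ 0)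
    (hfiber : ∀ x y : G₀, x ≠ 0 → y ≠ 0 → x ^ n * g (x ^ s) = y ^ n * g (y ^ s) →
      x ^ s = y ^ s) :
    InjOn (fun x => x ^ n * g (x ^ s)) {x | x ≠ 0} := by
  intro x hx y hy hxy
  have hs : x ^ s = y ^ s := hfiber x y hx hy hxy
  have hn : x ^ n = y ^ n := by
    simp only [hs] at hxy
    exact mul_right_cancel₀ (hg y hy) hxy
  exact eq_of_pow_eq_pow_of_coprime hcop hy hn hs

namespace FiniteField

variable {F : Type*} [Field F] [Fintype F]

theorem pow_pow_eq_one_of_mul_eq_card_sub_one {m s : ℕ} (hms : m * s = Fintype.card F - 1)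
    {x : F} (hx : x ≠ 0) : (x ^ s) ^ m = 1 := by
  rw [← pow_mul, mul_comm, hms, pow_card_sub_one_eq_one x hx]

theorem exists_ne_one_pow_eq_one {p : ℕ} (hp : p.Prime) (hpq : p ∣ Fintype.card F - 1) :
    ∃ ζ : F, ζ ≠ 1 ∧ ζ ^ p = 1 := by
  classical
  have := Fact.mk hp
  obtain ⟨ζ, hζ⟩ := exists_prime_orderOf_dvd_card p (G := Fˣ) (by rwa [Fintype.card_units])
  refine ⟨ζ, fun h1 => hp.ne_one ?_, ?_⟩
  · rw [← hζ, Units.val_eq_one.mp h1, orderOf_one]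
  · rw [← Units.val_pow_eq_pow_val, ← hζ, pow_orderOf_eq_one, Units.val_one]

theorem coprime_of_injOn_pow_mul_comp_pow {n s : ℕ} (hs : s ∣ Fintype.card F - 1) (g : F → F)
    (hinj : InjOn (fun x => x ^ n * g (x ^ s)) {x | x ≠ 0}) : n.Coprime s := by
  by_contra hcop
  obtain ⟨p, hp, hpn, hps⟩ := Nat.Prime.not_coprime_iff_dvd.mp hcop
  obtain ⟨ζ, hζ1, hζp⟩ := exists_ne_one_pow_eq_one hp (hps.trans hs)
  have hpow : ∀ {k : ℕ}, p ∣ k → ζ ^ k = 1 := fun ⟨c, hc⟩ => by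
    rw [hc, pow_mul, hζp, one_pow]
  refine hζ1 (hinj (ne_zero_pow hp.ne_zero (hζp ▸ one_ne_zero)) one_ne_zero ?_)
  simp only [hpow hpn, hpow hps, one_pow]

theorem bijOn_pow_mul_comp_pow_iff_coprime {n s : ℕ} (hs : s ∣ Fintype.card F - 1) {g : F → F}
    (hg : ∀ x : F, x ≠ 0 → g (x ^ s) ≠ 0)
    (hfiber : ∀ x y : F, x ≠ 0 → y ≠ 0 → x ^ n * g (x ^ s) = y ^ n * g (y ^ s) →
      x ^ s = y ^ s) :
    BijOn (fun x => x ^ n * g (x ^ s)) {x | x ≠ 0} {x | x ≠ 0} ↔ n.Coprime s := by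
  have hmaps : MapsTo (fun x => x ^ n * g (x ^ s)) {x | x ≠ 0} {x | x ≠ 0} :=
    fun x hx => mul_ne_zero (pow_ne_zero _ hx) (hg x hx)
  rw [← (toFinite _).injOn_iff_bijOn_of_mapsTo hmaps]
  exact ⟨coprime_of_injOn_pow_mul_comp_pow hs g,
    fun hcop => injOn_pow_mul_comp_pow_of_coprime hcop hg hfiber⟩

end FiniteField

theorem stmt19_general {F : Type*} [Field F] [Fintype F] (q n m : ℕ)
    (hq : Fintype.card F = q) (hm : m ∣ q - 1) (hm0 : 0 < m)
    (h : Polynomial F)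
    (f ψ : F → F)
    (hf : ∀ x, f x = x ^ n * h.eval (x ^ ((q - 1) / m)))
    (hψ : ∀ x, ψ x = x ^ n * (h.eval x) ^ ((q - 1) / m))
    -- f is m-nice
    (hmap : ∀ x : F, x ^ m = 1 → ψ x = 0 ∨ (ψ x) ^ m = 1)
    (hinj : ∀ x y : F, x ^ m = 1 → y ^ m = 1 → ψ x ≠ 0 → ψ y ≠ 0 → ψ x = ψ y → x = y)
    -- h has no roots in μ_m
    (hroots : ∀ x : F, x ^ m = 1 → h.eval x ≠ 0) :
    (Set.BijOn f
        {x : F | x ≠ 0 ∧ ∃ p, 0 < p ∧ ψ^[p] (x ^ ((q - 1) / m)) = x ^ ((q - 1) / m)}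
        {x : F | x ≠ 0 ∧ ∃ p, 0 < p ∧ ψ^[p] (x ^ ((q - 1) / m)) = x ^ ((q - 1) / m)} ↔
      Nat.gcd n ((q - 1) / m) = 1) ∧
    (Nat.gcd n (q - 1) = 1 → Set.BijOn f {x : F | x ≠ 0} {x : F | x ≠ 0}) := by
  subst hq
  set s := (Fintype.card F - 1) / m
  have hμ : ∀ x : F, x ≠ 0 → (x ^ s) ^ m = 1 :=
    fun x => FiniteField.pow_pow_eq_one_of_mul_eq_card_sub_one (Nat.mul_div_cancel' hm)
  have hψ0 : ∀ x : F, x ^ m = 1 → ψ x ≠ 0 := fun x hx => by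
    rw [hψ]
    exact mul_ne_zero (pow_ne_zero _ (ne_zero_pow hm0.ne' (hx ▸ one_ne_zero)))
      (pow_ne_zero _ (hroots x hx))
  have hψmaps : MapsTo ψ {x | x ^ m = 1} {x | x ^ m = 1} :=
    fun x hx => (hmap x hx).resolve_left (hψ0 x hx)
  have hψinj : InjOn ψ {x | x ^ m = 1} :=
    fun x hx y hy => hinj x y hx hy (hψ0 x hx) (hψ0 y hy)
  have hperiodic : {x : F | x ≠ 0 ∧ ∃ p, 0 < p ∧ ψ^[p] (x ^ s) = x ^ s} = {x | x ≠ 0} :=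
    Set.ext fun x => and_iff_left_of_imp fun hx =>
      (toFinite _).mem_periodicPts_of_injOn hψmaps hψinj (hμ x hx)
  have hfψ : ∀ x, f x ^ s = ψ (x ^ s) := fun x => by
    rw [hf, hψ, mul_pow, ← pow_mul, mul_comm n s, pow_mul]
  have hbij : BijOn f {x | x ≠ 0} {x | x ≠ 0} ↔ n.Coprime s := by
    rw [funext hf]
    refine FiniteField.bijOn_pow_mul_comp_pow_iff_coprime (Nat.div_dvd_of_dvd hm) (g := h.eval)
      (fun x hx => hroots _ (hμ x hx)) fun x y hx hy hxy => hψinj (hμ x hx) (hμ y hy) ?_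
    rw [← hfψ, ← hfψ, hf, hf, hxy]
  rw [hperiodic]
  exact ⟨hbij, fun hcop =>
    hbij.mpr (Nat.Coprime.coprime_dvd_right (Nat.div_dvd_of_dvd hm) hcop)⟩

theorem stmt19 {F : Type*} [Field F] [Fintype F] (q n m : ℕ)
    (hq : Fintype.card F = q) (hm : m ∣ q - 1) (hm0 : 0 < m) (hn : 0 < n)
    (h : Polynomial F) (hh0 : h.eval 0 ≠ 0)
    (f ψ : F → F)
    (hf : ∀ x, f x = x ^ n * h.eval (x ^ ((q - 1) / m)))
    (hψ : ∀ x, ψ x = x ^ n * (h.eval x) ^ ((q - 1) / m))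
    -- f is m-nice
    (hmap : ∀ x : F, x ^ m = 1 → ψ x = 0 ∨ (ψ x) ^ m = 1)
    (hinj : ∀ x y : F, x ^ m = 1 → y ^ m = 1 → ψ x ≠ 0 → ψ y ≠ 0 → ψ x = ψ y → x = y)
    -- h has no roots in μ_m
    (hroots : ∀ x : F, x ^ m = 1 → h.eval x ≠ 0) :
    (Set.BijOn f
        {x : F | x ≠ 0 ∧ ∃ p, 0 < p ∧ ψ^[p] (x ^ ((q - 1) / m)) = x ^ ((q - 1) / m)}
        {x : F | x ≠ 0 ∧ ∃ p, 0 < p ∧ ψ^[p] (x ^ ((q - 1) / m)) = x ^ ((q - 1) / m)} ↔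
      Nat.gcd n ((q - 1) / m) = 1) ∧
    (Nat.gcd n (q - 1) = 1 → Set.BijOn f {x : F | x ≠ 0} {x : F | x ≠ 0}) :=
  stmt19_general q n m hq hm hm0 h f ψ hf hψ hmap hinj hroots
end
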